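/- arXiv:2012.14633 — 2 statements merged into one kernel-verified Lean document; each statement's English description precedes it below -/
import Mathlib

section
/- Suppose h is supermodular, i.e., g_α is a supermodular set function for every α ∈ B. Then for every S ⊆ N the lifted supermodular inequalities are valid for H: for every (x,y,t) ∈ H, (1) sup_{α ∈ B} [ g_α(S) + Σ_{i ∈ N\S} ρ_α(i,S) x_i − Σ_{i ∈ S} ρ_α(i, N\{i})(1 − x_i) + α·y ] ≤ t, and (2) sup_{α ∈ B} [ g_α(S) + Σ_{i ∈ N\S} ρ_α(i,∅) x_i − Σ_{i ∈ S} ρ_α(i, S\{i})(1 − x_i) + α·y ] ≤ t. -/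
open Finset

noncomputable section

variable {ι : Type*}

/-- Indicator vector of a subset `S ⊆ N`. -/
def indVec [DecidableEq ι] (S : Finset ι) : ι → ℝ := fun i => if i ∈ S then 1 else 0

/-- `g_α(x) = inf_{y ∈ ℝ^N} (−α·y + h(x,y))`, with values in `ℝ ∪ {±∞}`. -/
def gA [Fintype ι] (h : (ι → ℝ) → (ι → ℝ) → EReal) (α x : ι → ℝ) : EReal :=
  ⨅ y : ι → ℝ, (((-(∑ i, α i * y i) : ℝ) : EReal) + h x y)

/-- `B = {α : g_α(x) is finite for every binary x}`. -/
def BSet [Fintype ι] [DecidableEq ι] (h : (ι → ℝ) → (ι → ℝ) → EReal) : Set (ι → ℝ) :=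
  {α | ∀ S : Finset ι, gA h α (indVec S) ≠ ⊤ ∧ gA h α (indVec S) ≠ ⊥}

/-- The (real-valued) set function `g_α`, identifying subsets with indicator vectors. -/
def gR [Fintype ι] [DecidableEq ι] (h : (ι → ℝ) → (ι → ℝ) → EReal)
    (α : ι → ℝ) (S : Finset ι) : ℝ := (gA h α (indVec S)).toReal

/-- Increment function `ρ_α(i,S) = g_α(S ∪ {i}) − g_α(S)`. -/
def rho [Fintype ι] [DecidableEq ι] (h : (ι → ℝ) → (ι → ℝ) → EReal)
    (α : ι → ℝ) (i : ι) (S : Finset ι) : ℝ := gR h α (insert i S) - gR h α S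

/-- The mixed 0-1 epigraph `H = {(x,y,t) : x binary, h(x,y) ≤ t}`. -/
def HSet [Fintype ι] (h : (ι → ℝ) → (ι → ℝ) → EReal) :
    Set ((ι → ℝ) × (ι → ℝ) × ℝ) :=
  {p | (∀ i, p.1 i = 0 ∨ p.1 i = 1) ∧ h p.1 p.2.1 ≤ ((p.2.2 : ℝ) : EReal)}

/-!
Fix `α ∈ B` and a point `(x_T, y, t) ∈ H`. Since `g_α(T) ≤ −α·y + h(x_T, y) ≤ t − α·y`, it suffices
to show that each lifted left-hand side, evaluated at `x_T`, is at most `g_α(T)`. Going from `S` to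
`T` adds the elements of `T \ S` one at a time and removes those of `S \ T` one at a time; by
supermodularity every increment of an added element is at least its increment at the smallest set
it is added to (`S`, resp. `∅`), and every increment of a removed element is at most its increment
at the largest set it is removed from (`N \ {i}`, resp. `S \ {i}`).
-/

namespace SetFunction

variable [DecidableEq ι]

def marginal (g : Finset ι → ℝ) (i : ι) (A : Finset ι) : ℝ := g (insert i A) - g A

def IsSupermodular (g : Finset ι → ℝ) : Prop :=
  ∀ i A B, A ⊆ B → i ∉ B → marginal g i A ≤ marginal g i B

variable {g : Finset ι → ℝ}

theorem IsSupermodular.add_sum_marginal_le (hg : IsSupermodular g)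
    {L P : Finset ι} (hLP : L ⊆ P) {D : Finset ι} (hD : Disjoint D P) :
    g P + ∑ i ∈ D, marginal g i L ≤ g (P ∪ D) := by
  induction D using Finset.induction_on with
  | empty => simp
  | @insert j D hj ih =>
    rw [disjoint_insert_left] at hD
    have hstep := hg j L (P ∪ D) (hLP.trans subset_union_left) (by simp [hD.1, hj])
    have hrest := ih hD.2
    rw [sum_insert hj, union_insert]
    unfold marginal at *
    linarith

theorem IsSupermodular.le_add_sum_marginal (hg : IsSupermodular g)
    {P : Finset ι} (f : ι → Finset ι) {D : Finset ι} (hD : Disjoint D P)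
    (hf : ∀ i ∈ D, (P ∪ D).erase i ⊆ f i ∧ i ∉ f i) :
    g (P ∪ D) ≤ g P + ∑ i ∈ D, marginal g i (f i) := by
  induction D using Finset.induction_on with
  | empty => simp
  | @insert j D hj ih =>
    rw [disjoint_insert_left] at hD
    have hjPD : j ∉ P ∪ D := by simp [hD.1, hj]
    have hrest : g (P ∪ D) ≤ g P + ∑ i ∈ D, marginal g i (f i) :=
      ih hD.2 fun i hi => ⟨(erase_subset_erase i (union_subset_union subset_rfl
        (subset_insert j D))).trans (hf i (mem_insert_of_mem hi)).1,
        (hf i (mem_insert_of_mem hi)).2⟩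
    obtain ⟨hsub, hjf⟩ := hf j (mem_insert_self j D)
    rw [union_insert, erase_insert hjPD] at hsub
    have hstep := hg j (P ∪ D) (f j) hsub hjf
    rw [sum_insert hj, union_insert]
    unfold marginal at *
    linarith

theorem IsSupermodular.lifted_univ_le [Fintype ι] (hg : IsSupermodular g)
    (S T : Finset ι) :
    g S + ∑ i ∈ T \ S, marginal g i S - ∑ i ∈ S \ T, marginal g i (univ.erase i) ≤ g T := by
  have hadd := hg.add_sum_marginal_le subset_rfl (sdiff_disjoint : Disjoint (T \ S) S)
  have hremove := hg.le_add_sum_marginal (P := T) (fun i => univ.erase i)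
    (sdiff_disjoint : Disjoint (S \ T) T)
    fun i _ => ⟨erase_subset_erase i (subset_univ _), notMem_erase i univ⟩
  rw [union_sdiff_self_eq_union] at hadd hremove
  rw [union_comm] at hremove
  linarith

theorem IsSupermodular.lifted_empty_le (hg : IsSupermodular g)
    (S T : Finset ι) :
    g S + ∑ i ∈ T \ S, marginal g i ∅ - ∑ i ∈ S \ T, marginal g i (S.erase i) ≤ g T := by
  have hadd := hg.add_sum_marginal_le (empty_subset (T ∩ S))
    (disjoint_of_subset_right inter_subset_right (sdiff_disjoint : Disjoint (T \ S) S))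
  have hremove := hg.le_add_sum_marginal (P := S ∩ T) (fun i => S.erase i)
    (disjoint_of_subset_right inter_subset_right (sdiff_disjoint : Disjoint (S \ T) T))
    fun i _ => ⟨erase_subset_erase i (union_subset inter_subset_left sdiff_subset),
      notMem_erase i S⟩
  rw [union_comm, sdiff_union_inter, inter_comm] at hadd
  rw [union_comm, sdiff_union_inter] at hremove
  linarith

end SetFunction

open SetFunction

section Epigraph

variable [DecidableEq ι]

theorem eq_indVec_of_binary [Fintype ι] {x : ι → ℝ} (hx : ∀ i, x i = 0 ∨ x i = 1) :
    x = indVec (univ.filter fun i => x i = 1) := by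
  funext i
  rcases hx i with h0 | h1 <;> simp [indVec, *]

theorem sum_mul_indVec (c : ι → ℝ) (A T : Finset ι) :
    ∑ i ∈ A, c i * indVec T i = ∑ i ∈ A ∩ T, c i := by
  rw [← filter_mem_eq_inter, sum_filter]
  exact sum_congr rfl fun i _ => by by_cases hi : i ∈ T <;> simp [indVec, hi]

theorem sum_mul_one_sub_indVec (c : ι → ℝ) (A T : Finset ι) :
    ∑ i ∈ A, c i * (1 - indVec T i) = ∑ i ∈ A \ T, c i := by
  rw [sdiff_eq_filter, sum_filter]
  exact sum_congr rfl fun i _ => by by_cases hi : i ∈ T <;> simp [indVec, hi]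

variable [Fintype ι] {h : (ι → ℝ) → (ι → ℝ) → EReal}

theorem gR_add_dotProduct_le {α : ι → ℝ} (hα : α ∈ BSet h) {T : Finset ι} {y : ι → ℝ} {t : ℝ}
    (hT : h (indVec T) y ≤ t) : gR h α T + ∑ i, α i * y i ≤ t := by
  have hle : gA h α (indVec T) ≤ ((-(∑ i, α i * y i) + t : ℝ) : EReal) := calc
    gA h α (indVec T) ≤ ((-(∑ i, α i * y i) : ℝ) : EReal) + h (indVec T) y := iInf_le _ y
    _ ≤ ((-(∑ i, α i * y i) : ℝ) : EReal) + (t : EReal) := add_le_add le_rfl hT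
    _ = ((-(∑ i, α i * y i) + t : ℝ) : EReal) := by norm_cast
  have := EReal.toReal_le_toReal hle (hα T).2 (EReal.coe_ne_top _)
  rw [EReal.toReal_coe] at this
  unfold gR
  linarith

end Epigraph

theorem stmt_2_general [Fintype ι] [DecidableEq ι] (h : (ι → ℝ) → (ι → ℝ) → EReal)
    (hsup : ∀ α ∈ BSet h, ∀ (i : ι) (S T : Finset ι), S ⊆ T → i ∉ T →
      gR h α (insert i S) - gR h α S ≤ gR h α (insert i T) - gR h α T)
    (S : Finset ι) (x y : ι → ℝ) (t : ℝ) (hmem : (x, y, t) ∈ HSet h) :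
    ((⨆ α ∈ BSet h,
        ((gR h α S + (∑ i ∈ Finset.univ \ S, rho h α i S * x i)
          - (∑ i ∈ S, rho h α i (Finset.univ \ {i}) * (1 - x i))
          + ∑ i, α i * y i : ℝ) : EReal)) ≤ ((t : ℝ) : EReal))
    ∧ ((⨆ α ∈ BSet h,
        ((gR h α S + (∑ i ∈ Finset.univ \ S, rho h α i ∅ * x i)
          - (∑ i ∈ S, rho h α i (S \ {i}) * (1 - x i))
          + ∑ i, α i * y i : ℝ) : EReal)) ≤ ((t : ℝ) : EReal)) := by
  obtain ⟨hbin, hht⟩ : (∀ i, x i = 0 ∨ x i = 1) ∧ h x y ≤ t := hmem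
  obtain ⟨T, rfl⟩ : ∃ T, x = indVec T := ⟨_, eq_indVec_of_binary hbin⟩
  have hTS : (univ \ S) ∩ T = T \ S := by ext; simp [and_comm]
  have hrho : ∀ α, rho h α = marginal (gR h α) := fun _ => rfl
  simp only [hrho, sum_mul_indVec, sum_mul_one_sub_indVec, hTS, sdiff_singleton_eq_erase]
  refine ⟨iSup₂_le fun α hα => ?_, iSup₂_le fun α hα => ?_⟩ <;> rw [EReal.coe_le_coe_iff]
  · linarith [IsSupermodular.lifted_univ_le (hsup α hα) S T, gR_add_dotProduct_le hα hht]
  · linarith [IsSupermodular.lifted_empty_le (hsup α hα) S T, gR_add_dotProduct_le hα hht]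

/-- lifted supermodular inequalities are valid.
If `h` is supermodular, then for every `S ⊆ N` and `(x,y,t) ∈ H`, the suprema over
`α ∈ B` of the two (lifted) supermodular expressions are at most `t`. -/
theorem stmt_2 [Fintype ι] [DecidableEq ι] (h : (ι → ℝ) → (ι → ℝ) → EReal)
    (hne : ∀ x y, h x y ≠ ⊥)
    (hsup : ∀ α ∈ BSet h, ∀ (i : ι) (S T : Finset ι), S ⊆ T → i ∉ T →
      gR h α (insert i S) - gR h α S ≤ gR h α (insert i T) - gR h α T)
    (S : Finset ι) (x y : ι → ℝ) (t : ℝ) (hmem : (x, y, t) ∈ HSet h) :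
    ((⨆ α ∈ BSet h,
        ((gR h α S + (∑ i ∈ Finset.univ \ S, rho h α i S * x i)
          - (∑ i ∈ S, rho h α i (Finset.univ \ {i}) * (1 - x i))
          + ∑ i, α i * y i : ℝ) : EReal)) ≤ ((t : ℝ) : EReal))
    ∧ ((⨆ α ∈ BSet h,
        ((gR h α S + (∑ i ∈ Finset.univ \ S, rho h α i ∅ * x i)
          - (∑ i ∈ S, rho h α i (S \ {i}) * (1 - x i))
          + ∑ i, α i * y i : ℝ) : EReal)) ≤ ((t : ℝ) : EReal)) :=
  stmt_2_general h hsup S x y t hmem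
end
end

section
/- Let (L,R,U) be a partition of N⁺ and (x,y) ∈ [0,1]^N × ℝ₊^N. Consider the minimization problem φ_{L,R,U}(x,y) = min over λ ∈ ℝ₊^R, μ ∈ ℝ₊^R, λ₀, μ₀, ζ ∈ ℝ₊ of (y(L)−λ₀)²/(1−x(R)−x(U)+μ(R)+μ₀) + Σ_{i∈R} (y_i−λ_i)²/(x_i−μ_i) + (y(U)−y(N⁻)+λ₀+λ(R)+ζ)²/(x(U)−μ₀), subject to 1−x(R)−x(U)+μ(R)+μ₀ ≥ 0, μ_i ≤ x_i for all i ∈ R, and μ₀ ≤ x(U). If the following conditions hold: x(N⁺\L) ≤ 1; y(L)/(1−x(N⁺\L)) < y_i/x_i for all i ∈ N⁺\L; y(U) − y(N⁻) ≥ 0; (y(U)−y(N⁻))/x(U) > y_i/x_i for all i ∈ N⁺\U; and y(L)/(1−x(N⁺\L)) < (y(U)−y(N⁻))/x(U); then λ = 0, μ = 0, λ₀ = μ₀ = ζ = 0 is an optimal solution, so that φ_{L,R,U}(x,y) = y(L)²/(1−x(R)−x(U)) + Σ_{i∈R} y_i²/x_i + (y(U)−y(N⁻))²/x(U). -/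
open Finset

noncomputable section

variable {ι : Type*}

/-- Extended-real ratio with the conventions `a/0 = +∞` for `a > 0` and `0/0 = 0`
(and `a/0 = −∞` for `a < 0`, which never occurs in the statements below). -/
def ratio (a b : ℝ) : EReal :=
  if b = 0 then (if 0 < a then (⊤ : EReal) else if a < 0 then (⊥ : EReal) else (0 : EReal))
  else ((a / b : ℝ) : EReal)

/-- Objective of the extended formulation of the lifted supermodular inequality for the
partition `(L,R,U)`; `Nother` is the "other side" of the partition of `N`
(`N⁻` for the inequalities over `B⁺`, and `N⁺` for those over `B⁻`). -/
def objX [Fintype ι] (Nother L R U : Finset ι) (x y : ι → ℝ)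
    (lam mu : ι → ℝ) (lam0 mu0 zeta : ℝ) : EReal :=
  ratio (((∑ i ∈ L, y i) - lam0) ^ 2)
      (1 - (∑ i ∈ R, x i) - (∑ i ∈ U, x i) + (∑ i ∈ R, mu i) + mu0)
    + (∑ i ∈ R, ratio ((y i - lam i) ^ 2) (x i - mu i))
    + ratio (((∑ i ∈ U, y i) - (∑ i ∈ Nother, y i) + lam0 + (∑ i ∈ R, lam i) + zeta) ^ 2)
      ((∑ i ∈ U, x i) - mu0)

/-- Feasibility of `(λ, μ, λ₀, μ₀, ζ)` in the extended formulation: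
`λ, μ ∈ ℝ₊^R`, `λ₀, μ₀, ζ ∈ ℝ₊`, `1 − x(R) − x(U) + μ(R) + μ₀ ≥ 0`,
`μ_i ≤ x_i` for `i ∈ R`, and `μ₀ ≤ x(U)`. -/
def feasX [Fintype ι] (R U : Finset ι) (x : ι → ℝ)
    (lam mu : ι → ℝ) (lam0 mu0 zeta : ℝ) : Prop :=
  (∀ i, 0 ≤ lam i) ∧ (∀ i, 0 ≤ mu i) ∧ 0 ≤ lam0 ∧ 0 ≤ mu0 ∧ 0 ≤ zeta ∧
  0 ≤ 1 - (∑ i ∈ R, x i) - (∑ i ∈ U, x i) + (∑ i ∈ R, mu i) + mu0 ∧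
  (∀ i ∈ R, mu i ≤ x i) ∧ mu0 ≤ ∑ i ∈ U, x i

/-- `φ_{L,R,U}(x,y)`: the optimal value of the extended formulation. -/
def phiX [Fintype ι] (Nother L R U : Finset ι) (x y : ι → ℝ) : EReal :=
  sInf {v : EReal | ∃ lam mu : ι → ℝ, ∃ lam0 mu0 zeta : ℝ,
    feasX R U x lam mu lam0 mu0 zeta ∧ v = objX Nother L R U x y lam mu lam0 mu0 zeta}

/-! ### Auxiliary lemmas -/

/-- Real-valued counterpart of `ratio` (junk value `0` when the denominator vanishes). -/
def rrho (a b : ℝ) : ℝ := if b = 0 then 0 else a / b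

lemma ratio_nonneg {a b : ℝ} (ha : 0 ≤ a) (hb : 0 ≤ b) : (0 : EReal) ≤ ratio a b := by
  unfold ratio
  split_ifs with h1 h2 h3
  · exact le_top
  · linarith
  · exact le_refl 0
  · exact_mod_cast div_nonneg ha hb

lemma ratio_eq_coe {a b : ℝ} (h : b = 0 → a = 0) : ratio a b = ((rrho a b : ℝ) : EReal) := by
  unfold ratio rrho
  by_cases hb : b = 0
  · simp [hb, h hb]
  · simp [hb]

lemma ratio_ne_top_num {p r : ℝ} (hr : r = 0) (h : ratio (p ^ 2) r ≠ ⊤) : p = 0 := by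
  by_contra hp
  have h2 : 0 < p ^ 2 := by positivity
  apply h
  unfold ratio
  rw [if_pos hr, if_pos h2]

lemma ratio_sq_eq_coe {p r : ℝ} (h : ratio (p ^ 2) r ≠ ⊤) :
    ratio (p ^ 2) r = ((rrho (p ^ 2) r : ℝ) : EReal) :=
  ratio_eq_coe (fun h0 => by rw [ratio_ne_top_num h0 h]; ring)

lemma rho_lin_le {p r : ℝ} (s : ℝ) (hr : 0 ≤ r) (h : r = 0 → p = 0) :
    2 * s * p - s ^ 2 * r ≤ rrho (p ^ 2) r := by
  unfold rrho
  split_ifs with h0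
  · rw [h0, h h0]; nlinarith
  · have hr' : 0 < r := lt_of_le_of_ne hr (Ne.symm h0)
    rw [le_div_iff₀ hr']
    nlinarith [sq_nonneg (p - s * r)]

lemma rho_lin_eq {p r s : ℝ} (h : p = s * r) : rrho (p ^ 2) r = 2 * s * p - s ^ 2 * r := by
  unfold rrho
  split_ifs with h0
  · rw [h0] at h ⊢; rw [h]; ring
  · rw [h]; field_simp; ring

lemma ratio_zero_num (b : ℝ) : ratio 0 b = 0 := by
  unfold ratio; split_ifs <;> simp_all

lemma ratio_sq_zero (b : ℝ) : ratio ((0 : ℝ) ^ 2) b = 0 := by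
  norm_num [ratio_zero_num]

lemma num_zero_of_lt {a b : ℝ} (ha : 0 ≤ a) (hb : b = 0) {z : EReal} (h : ratio a b < z) :
    a = 0 := by
  by_contra h'
  have hA : ratio a b = ⊤ := by
    unfold ratio
    rw [if_pos hb, if_pos (lt_of_le_of_ne ha (Ne.symm h'))]
  rw [hA] at h
  exact not_top_lt h

lemma coe_finsum (s : Finset ι) (f : ι → ℝ) :
    ((∑ i ∈ s, f i : ℝ) : EReal) = ∑ i ∈ s, ((f i : ℝ) : EReal) := by
  classical
  induction s using Finset.cons_induction with
  | empty => simp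
  | cons a s ha ih => rw [Finset.sum_cons, Finset.sum_cons, EReal.coe_add, ih]

theorem stmt_16 [Fintype ι] [DecidableEq ι] (Np Nm : Finset ι)
    (hNdisj : Disjoint Np Nm) (hNunion : Np ∪ Nm = Finset.univ)
    (L R U : Finset ι) (hLR : Disjoint L R) (hLU : Disjoint L U) (hRU : Disjoint R U)
    (hpart : L ∪ R ∪ U = Np)
    (x y : ι → ℝ) (hx : ∀ i, 0 ≤ x i ∧ x i ≤ 1) (hy : ∀ i, 0 ≤ y i)
    (c1 : (∑ i ∈ Np \ L, x i) ≤ 1)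
    (c2 : ∀ i ∈ Np \ L,
      ratio (∑ j ∈ L, y j) (1 - ∑ j ∈ Np \ L, x j) < ratio (y i) (x i))
    (c3 : 0 ≤ (∑ i ∈ U, y i) - ∑ i ∈ Nm, y i)
    (c4 : ∀ i ∈ Np \ U, ratio (y i) (x i) <
      ratio ((∑ j ∈ U, y j) - ∑ j ∈ Nm, y j) (∑ j ∈ U, x j))
    (c5 : ratio (∑ j ∈ L, y j) (1 - ∑ j ∈ Np \ L, x j) <
      ratio ((∑ j ∈ U, y j) - ∑ j ∈ Nm, y j) (∑ j ∈ U, x j)) :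
    feasX R U x (fun _ => 0) (fun _ => 0) 0 0 0 ∧
    objX Nm L R U x y (fun _ => 0) (fun _ => 0) 0 0 0 =
      ratio ((∑ i ∈ L, y i) ^ 2) (1 - (∑ i ∈ R, x i) - (∑ i ∈ U, x i))
        + (∑ i ∈ R, ratio ((y i) ^ 2) (x i))
        + ratio (((∑ i ∈ U, y i) - ∑ i ∈ Nm, y i) ^ 2) (∑ i ∈ U, x i) ∧
    ∀ (lam mu : ι → ℝ) (lam0 mu0 zeta : ℝ), feasX R U x lam mu lam0 mu0 zeta →
      objX Nm L R U x y (fun _ => 0) (fun _ => 0) 0 0 0 ≤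
        objX Nm L R U x y lam mu lam0 mu0 zeta := by
  have hA : (0 : ℝ) ≤ ∑ i ∈ L, y i := Finset.sum_nonneg fun i _ => hy i
  have hXU : (0 : ℝ) ≤ ∑ i ∈ U, x i := Finset.sum_nonneg fun i _ => (hx i).1
  have hNpL : Np \ L = R ∪ U := by
    rw [← hpart]; ext i
    simp only [Finset.mem_sdiff, Finset.mem_union]
    constructor
    · rintro ⟨(h | h) | h, hL⟩
      · exact absurd h hL
      · exact Or.inl h
      · exact Or.inr h
    · rintro (h | h)
      · exact ⟨Or.inl (Or.inr h), fun hL => Finset.disjoint_left.mp hLR hL h⟩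
      · exact ⟨Or.inr h, fun hL => Finset.disjoint_left.mp hLU hL h⟩
  have hNpU : Np \ U = L ∪ R := by
    rw [← hpart]; ext i
    simp only [Finset.mem_sdiff, Finset.mem_union]
    constructor
    · rintro ⟨(h | h) | h, hU⟩
      · exact Or.inl h
      · exact Or.inr h
      · exact absurd h hU
    · rintro (h | h)
      · exact ⟨Or.inl (Or.inl h), fun hU => Finset.disjoint_left.mp hLU h hU⟩
      · exact ⟨Or.inl (Or.inr h), fun hU => Finset.disjoint_left.mp hRU h hU⟩
  have hxsum : ∑ i ∈ Np \ L, x i = (∑ i ∈ R, x i) + ∑ i ∈ U, x i := by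
    rw [hNpL, Finset.sum_union hRU]
  have hbdef : 1 - ∑ j ∈ Np \ L, x j = 1 - (∑ i ∈ R, x i) - (∑ i ∈ U, x i) := by
    rw [hxsum]; ring
  have hb : (0 : ℝ) ≤ 1 - (∑ i ∈ R, x i) - (∑ i ∈ U, x i) := by
    rw [← hbdef]; linarith
  rw [hbdef] at c2 c5
  have hfeas0 : feasX R U x (fun _ => 0) (fun _ => 0) 0 0 0 := by
    refine ⟨fun _ => le_refl 0, fun _ => le_refl 0, le_refl 0, le_refl 0, le_refl 0, ?_,
      fun i _ => (hx i).1, hXU⟩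
    simp only [Finset.sum_const_zero, add_zero]
    linarith
  have hval : objX Nm L R U x y (fun _ => 0) (fun _ => 0) 0 0 0 =
      ratio ((∑ i ∈ L, y i) ^ 2) (1 - (∑ i ∈ R, x i) - (∑ i ∈ U, x i))
        + (∑ i ∈ R, ratio ((y i) ^ 2) (x i))
        + ratio (((∑ i ∈ U, y i) - ∑ i ∈ Nm, y i) ^ 2) (∑ i ∈ U, x i) := by
    simp [objX]
  refine ⟨hfeas0, hval, ?_⟩
  rintro lam mu lam0 mu0 zeta ⟨hlam, hmu, hlam0, hmu0, hzeta, hr1, hmux, hmu0U⟩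
  by_cases hT : objX Nm L R U x y lam mu lam0 mu0 zeta = ⊤
  · rw [hT]; exact le_top
  rw [hval]
  unfold objX at hT ⊢
  have hrx : ∀ i ∈ R, (0 : ℝ) ≤ x i - mu i := fun i hi => sub_nonneg.mpr (hmux i hi)
  have hr3 : (0 : ℝ) ≤ (∑ i ∈ U, x i) - mu0 := sub_nonneg.mpr hmu0U
  have ht1 : (0 : EReal) ≤ ratio (((∑ i ∈ L, y i) - lam0) ^ 2)
      (1 - (∑ i ∈ R, x i) - (∑ i ∈ U, x i) + (∑ i ∈ R, mu i) + mu0) :=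
    ratio_nonneg (sq_nonneg _) hr1
  have ht2 : (0 : EReal) ≤ ∑ i ∈ R, ratio ((y i - lam i) ^ 2) (x i - mu i) :=
    Finset.sum_nonneg fun i hi => ratio_nonneg (sq_nonneg _) (hrx i hi)
  have ht3 : (0 : EReal) ≤ ratio (((∑ i ∈ U, y i) - (∑ i ∈ Nm, y i) + lam0
      + (∑ i ∈ R, lam i) + zeta) ^ 2) ((∑ i ∈ U, x i) - mu0) :=
    ratio_nonneg (sq_nonneg _) hr3
  have h1T : ratio (((∑ i ∈ L, y i) - lam0) ^ 2)
      (1 - (∑ i ∈ R, x i) - (∑ i ∈ U, x i) + (∑ i ∈ R, mu i) + mu0) ≠ ⊤ :=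
    ne_top_of_le_ne_top hT
      ((le_add_of_nonneg_right ht2).trans (le_add_of_nonneg_right ht3))
  have h3T : ratio (((∑ i ∈ U, y i) - (∑ i ∈ Nm, y i) + lam0
      + (∑ i ∈ R, lam i) + zeta) ^ 2) ((∑ i ∈ U, x i) - mu0) ≠ ⊤ :=
    ne_top_of_le_ne_top hT (le_add_of_nonneg_left (add_nonneg ht1 ht2))
  have h2T : ∀ i ∈ R, ratio ((y i - lam i) ^ 2) (x i - mu i) ≠ ⊤ := by
    intro i hi
    refine ne_top_of_le_ne_top hT ?_
    refine (Finset.single_le_sum (f := fun j => ratio ((y j - lam j) ^ 2) (x j - mu j))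
      (fun j hj => ratio_nonneg (sq_nonneg _) (hrx j hj)) hi).trans ?_
    exact (le_add_of_nonneg_left ht1).trans (le_add_of_nonneg_right ht3)
  have hbA : (1 - (∑ i ∈ R, x i) - (∑ i ∈ U, x i)) = 0 → (∑ i ∈ L, y i) = 0 :=
    fun h => num_zero_of_lt hA h c5
  have hLRnn : (0 : ℝ) ≤ ∑ i ∈ R, lam i := Finset.sum_nonneg fun i _ => hlam i
  by_cases hXU0 : (∑ i ∈ U, x i) = 0
  · -- degenerate case x(U) = 0
    have hmu00 : mu0 = 0 := le_antisymm (hmu0U.trans (le_of_eq hXU0)) hmu0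
    have hr3eq : (∑ i ∈ U, x i) - mu0 = 0 := by rw [hXU0, hmu00]; ring
    have hP3 : (∑ i ∈ U, y i) - (∑ i ∈ Nm, y i) + lam0 + (∑ i ∈ R, lam i) + zeta = 0 :=
      ratio_ne_top_num hr3eq h3T
    have hW0 : (∑ i ∈ U, y i) - (∑ i ∈ Nm, y i) = 0 := by linarith
    have habs : ∀ i ∈ Np \ U, False := by
      intro i hi
      have h4 := c4 i hi
      rw [hW0, ratio_zero_num] at h4
      exact absurd h4 (not_lt.mpr (ratio_nonneg (hy i) (hx i).1))
    have hRe : R = ∅ := Finset.eq_empty_of_forall_notMem fun i hi =>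
      habs i (by rw [hNpU]; exact Finset.mem_union_right L hi)
    have hLe : L = ∅ := Finset.eq_empty_of_forall_notMem fun i hi =>
      habs i (by rw [hNpU]; exact Finset.mem_union_left R hi)
    refine le_trans (le_of_eq ?_) (add_nonneg (add_nonneg ht1 ht2) ht3)
    rw [hLe, hRe, hW0]
    simp [ratio_zero_num, ratio_sq_zero]
  · -- main case x(U) > 0
    have hXUpos : (0 : ℝ) < ∑ i ∈ U, x i := lt_of_le_of_ne hXU (Ne.symm hXU0)
    have hxpos : ∀ i ∈ R, 0 < x i := by
      intro i hi
      rcases (hx i).1.lt_or_eq with h | h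
      · exact h
      · exfalso
        have hx0 : x i = 0 := h.symm
        have hiNpU : i ∈ Np \ U := by rw [hNpU]; exact Finset.mem_union_right L hi
        have hyi : y i = 0 := num_zero_of_lt (hy i) hx0 (c4 i hiNpU)
        have hiNpL : i ∈ Np \ L := by rw [hNpL]; exact Finset.mem_union_left U hi
        have h2 := c2 i hiNpL
        rw [hyi, hx0, ratio_zero_num] at h2
        exact absurd h2 (not_lt.mpr (ratio_nonneg hA hb))
    set s1 : ℝ := if (1 - (∑ i ∈ R, x i) - (∑ i ∈ U, x i)) = 0 then 0
      else (∑ i ∈ L, y i) / (1 - (∑ i ∈ R, x i) - (∑ i ∈ U, x i)) with hs1def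
    set s3 : ℝ := ((∑ i ∈ U, y i) - (∑ i ∈ Nm, y i)) / (∑ i ∈ U, x i) with hs3def
    have hs3nn : (0 : ℝ) ≤ s3 := div_nonneg c3 hXU
    have hs1nn : (0 : ℝ) ≤ s1 := by
      rw [hs1def]; split_ifs with h
      · exact le_refl 0
      · exact div_nonneg hA hb
    have hs13 : s1 ≤ s3 := by
      rw [hs1def]; split_ifs with h
      · exact hs3nn
      · unfold ratio at c5
        rw [if_neg h, if_neg hXU0] at c5
        exact (EReal.coe_lt_coe_iff.mp c5).le
    have hsi3 : ∀ i ∈ R, y i / x i ≤ s3 := by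
      intro i hi
      have hiNpU : i ∈ Np \ U := by rw [hNpU]; exact Finset.mem_union_right L hi
      have h4 := c4 i hiNpU
      unfold ratio at h4
      rw [if_neg (ne_of_gt (hxpos i hi)), if_neg hXU0] at h4
      exact (EReal.coe_lt_coe_iff.mp h4).le
    have hs1i : ∀ i ∈ R, s1 ≤ y i / x i := by
      intro i hi
      rw [hs1def]; split_ifs with h
      · exact div_nonneg (hy i) (hxpos i hi).le
      · have hiNpL : i ∈ Np \ L := by rw [hNpL]; exact Finset.mem_union_left U hi
        have h2 := c2 i hiNpL
        unfold ratio at h2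
        rw [if_neg h, if_neg (ne_of_gt (hxpos i hi))] at h2
        exact (EReal.coe_lt_coe_iff.mp h2).le
    -- convert the goal to a real inequality
    have e1 : ratio ((∑ i ∈ L, y i) ^ 2) (1 - (∑ i ∈ R, x i) - (∑ i ∈ U, x i))
        = ((rrho ((∑ i ∈ L, y i) ^ 2) (1 - (∑ i ∈ R, x i) - (∑ i ∈ U, x i)) : ℝ) : EReal) :=
      ratio_eq_coe (fun h => by rw [hbA h]; ring)
    have e2 : ∀ i ∈ R, ratio ((y i) ^ 2) (x i) = ((rrho ((y i) ^ 2) (x i) : ℝ) : EReal) :=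
      fun i hi => ratio_eq_coe (fun h => absurd h (ne_of_gt (hxpos i hi)))
    have e3 : ratio (((∑ i ∈ U, y i) - ∑ i ∈ Nm, y i) ^ 2) (∑ i ∈ U, x i)
        = ((rrho (((∑ i ∈ U, y i) - ∑ i ∈ Nm, y i) ^ 2) (∑ i ∈ U, x i) : ℝ) : EReal) :=
      ratio_eq_coe (fun h => absurd h hXU0)
    have f1 := ratio_sq_eq_coe h1T
    have f3 := ratio_sq_eq_coe h3T
    have f2 : ∀ i ∈ R, ratio ((y i - lam i) ^ 2) (x i - mu i)
        = ((rrho ((y i - lam i) ^ 2) (x i - mu i) : ℝ) : EReal) :=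
      fun i hi => ratio_sq_eq_coe (h2T i hi)
    rw [e1, e3, f1, f3, Finset.sum_congr rfl e2, Finset.sum_congr rfl f2,
      ← coe_finsum, ← coe_finsum, ← EReal.coe_add, ← EReal.coe_add, ← EReal.coe_add,
      ← EReal.coe_add, EReal.coe_le_coe_iff]
    -- exact values of the left-hand side terms
    have g1 : rrho ((∑ i ∈ L, y i) ^ 2) (1 - (∑ i ∈ R, x i) - (∑ i ∈ U, x i))
        = 2 * s1 * (∑ i ∈ L, y i) - s1 ^ 2 * (1 - (∑ i ∈ R, x i) - (∑ i ∈ U, x i)) := by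
      refine rho_lin_eq ?_
      rw [hs1def]; split_ifs with h
      · rw [hbA h]; ring
      · field_simp
    have g3 : rrho (((∑ i ∈ U, y i) - ∑ i ∈ Nm, y i) ^ 2) (∑ i ∈ U, x i)
        = 2 * s3 * ((∑ i ∈ U, y i) - ∑ i ∈ Nm, y i) - s3 ^ 2 * (∑ i ∈ U, x i) := by
      refine rho_lin_eq ?_
      rw [hs3def]; field_simp
    -- lower bounds on the right-hand side terms
    have G1 : 2 * s1 * ((∑ i ∈ L, y i) - lam0)
        - s1 ^ 2 * (1 - (∑ i ∈ R, x i) - (∑ i ∈ U, x i) + (∑ i ∈ R, mu i) + mu0)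
        ≤ rrho (((∑ i ∈ L, y i) - lam0) ^ 2)
          (1 - (∑ i ∈ R, x i) - (∑ i ∈ U, x i) + (∑ i ∈ R, mu i) + mu0) :=
      rho_lin_le s1 hr1 (fun h => ratio_ne_top_num h h1T)
    have G3 : 2 * s3 * ((∑ i ∈ U, y i) - (∑ i ∈ Nm, y i) + lam0 + (∑ i ∈ R, lam i) + zeta)
        - s3 ^ 2 * ((∑ i ∈ U, x i) - mu0)
        ≤ rrho (((∑ i ∈ U, y i) - (∑ i ∈ Nm, y i) + lam0 + (∑ i ∈ R, lam i) + zeta) ^ 2)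
          ((∑ i ∈ U, x i) - mu0) :=
      rho_lin_le s3 hr3 (fun h => ratio_ne_top_num h h3T)
    have H2 : ∀ i ∈ R, rrho ((y i) ^ 2) (x i) - 2 * s3 * lam i + s1 ^ 2 * mu i
        ≤ rrho ((y i - lam i) ^ 2) (x i - mu i) := by
      intro i hi
      refine le_trans ?_ (rho_lin_le (y i / x i) (hrx i hi)
        (fun h => ratio_ne_top_num h (h2T i hi)))
      rw [rho_lin_eq (div_mul_cancel₀ (y i) (ne_of_gt (hxpos i hi))).symm]
      have h1 := hs1i i hi
      have h2 := hsi3 i hi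
      have h3 := hlam i
      have h4 := hmu i
      nlinarith [mul_nonneg h3 (sub_nonneg.mpr h2),
        mul_nonneg h4 (sub_nonneg.mpr (pow_le_pow_left₀ hs1nn h1 2))]
    have Hsum := Finset.sum_le_sum H2
    rw [Finset.sum_add_distrib, Finset.sum_sub_distrib, ← Finset.mul_sum,
      ← Finset.mul_sum] at Hsum
    have key : (0 : ℝ) ≤ 2 * lam0 * (s3 - s1) + 2 * s3 * zeta + mu0 * (s3 ^ 2 - s1 ^ 2) := by
      have k1 : (0 : ℝ) ≤ 2 * lam0 * (s3 - s1) :=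
        mul_nonneg (by linarith) (sub_nonneg.mpr hs13)
      have k2 : (0 : ℝ) ≤ 2 * s3 * zeta := mul_nonneg (by linarith) hzeta
      have k3 : (0 : ℝ) ≤ mu0 * (s3 ^ 2 - s1 ^ 2) :=
        mul_nonneg hmu0 (sub_nonneg.mpr (pow_le_pow_left₀ hs1nn hs13 2))
      linarith
    rw [g1, g3]
    linarith [G1, G3, Hsum, key]

end
end
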